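/- arXiv:2210.08204 — 2 statements merged into one kernel-verified Lean document; each statement's English description precedes it below -/
import Mathlib

section
/- If D : ℝ^N → ℝ^N is a contraction with constant δ ∈ [0,1), Φ ∈ ℝ^{M×N}, y ∈ ℝ^M, and 0 < γ ≤ 2/σ_max(ΦᵀΦ), then the map S(x) = D(x - γΦᵀ(Φx - y)) is a contraction with constant at most δ. -/
/-!
`x ↦ x - γ Φᵀ(Φx - y)` is a gradient step for `½‖Φx - y‖²`, and the difference of two such
steps is `w - γ ΦᵀΦ w` with `w = z₁ - z₂`. Expanding the square gives
`‖w - γ ΦᵀΦ w‖² ≤ ‖w‖² - γ ‖Φw‖² (2 - γ ‖Φ‖²) ≤ ‖w‖²`, since `σ_max(ΦᵀΦ) = ‖Φ‖²`.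
The step is therefore nonexpansive, and composing with the `δ`-contraction `D` gives `δ`.
-/

open Matrix

/-- The largest singular value of a real matrix, i.e. the operator norm of the
induced linear map between Euclidean spaces. -/
noncomputable def sigmaMax {M N : ℕ} (A : Matrix (Fin M) (Fin N) ℝ) : ℝ :=
  ‖LinearMap.toContinuousLinearMap (Matrix.toEuclideanLin A)‖

theorem ContinuousLinearMap.norm_sub_smul_adjoint_comp_self_le
    {E F : Type*} [NormedAddCommGroup E] [InnerProductSpace ℝ E] [CompleteSpace E]
    [NormedAddCommGroup F] [InnerProductSpace ℝ F] [CompleteSpace F]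
    (T : E →L[ℝ] F) {γ : ℝ} (hγ0 : 0 ≤ γ) (hγ : γ * ‖T‖ ^ 2 ≤ 2) (w : E) :
    ‖w - γ • T.adjoint (T w)‖ ≤ ‖w‖ := by
  have h_inner : inner ℝ w (T.adjoint (T w)) = ‖T w‖ ^ 2 := by
    rw [ContinuousLinearMap.adjoint_inner_right, real_inner_self_eq_norm_sq]
  have h_norm : ‖T.adjoint (T w)‖ ≤ ‖T‖ * ‖T w‖ := by
    simpa only [LinearIsometryEquiv.norm_map] using T.adjoint.le_opNorm (T w)
  have h_sq : ‖w - γ • T.adjoint (T w)‖ ^ 2 ≤ ‖w‖ ^ 2 :=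
    calc ‖w - γ • T.adjoint (T w)‖ ^ 2
        = ‖w‖ ^ 2 - 2 * γ * ‖T w‖ ^ 2 + γ ^ 2 * ‖T.adjoint (T w)‖ ^ 2 := by
          rw [norm_sub_sq_real, inner_smul_right, norm_smul, h_inner, mul_pow,
            Real.norm_eq_abs, sq_abs]
          ring
      _ ≤ ‖w‖ ^ 2 - 2 * γ * ‖T w‖ ^ 2 + γ ^ 2 * (‖T‖ * ‖T w‖) ^ 2 := by gcongr
      _ = ‖w‖ ^ 2 - γ * ‖T w‖ ^ 2 * (2 - γ * ‖T‖ ^ 2) := by ring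
      _ ≤ ‖w‖ ^ 2 := by
          have : 0 ≤ γ * ‖T w‖ ^ 2 * (2 - γ * ‖T‖ ^ 2) := by
            have := sub_nonneg.mpr hγ
            positivity
          linarith
  exact pow_le_pow_iff_left₀ (norm_nonneg _) (norm_nonneg _) two_ne_zero |>.mp h_sq

theorem Matrix.toContinuousLinearMap_toEuclideanLin_transpose {M N : ℕ}
    (Φ : Matrix (Fin M) (Fin N) ℝ) :
    LinearMap.toContinuousLinearMap (toEuclideanLin Φᵀ) =
      (LinearMap.toContinuousLinearMap (toEuclideanLin Φ)).adjoint := by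
  rw [← conjTranspose_eq_transpose_of_trivial, toEuclideanLin_conjTranspose_eq_adjoint,
    LinearMap.adjoint_eq_toCLM_adjoint]
  rfl

theorem sigmaMax_transpose_mul_self {M N : ℕ} (Φ : Matrix (Fin M) (Fin N) ℝ) :
    sigmaMax (Φᵀ * Φ) = sigmaMax Φ ^ 2 := by
  have h_mul : toEuclideanLin (Φᵀ * Φ) = toEuclideanLin Φᵀ ∘ₗ toEuclideanLin Φ :=
    toLpLin_mul 2 2 2 Φᵀ Φ
  rw [sigmaMax, sigmaMax, sq, ← ContinuousLinearMap.norm_adjoint_comp_self,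
    ← toContinuousLinearMap_toEuclideanLin_transpose, h_mul]
  rfl

theorem stmt0_general {M N : ℕ} (D : EuclideanSpace ℝ (Fin N) → EuclideanSpace ℝ (Fin N))
    (δ : ℝ) (hδ0 : 0 ≤ δ)
    (hD : ∀ z₁ z₂ : EuclideanSpace ℝ (Fin N), ‖D z₁ - D z₂‖ ≤ δ * ‖z₁ - z₂‖)
    (Φ : Matrix (Fin M) (Fin N) ℝ) (y : EuclideanSpace ℝ (Fin M))
    (γ : ℝ) (hγ0 : 0 < γ) (hγ : γ ≤ 2 / sigmaMax (Φᵀ * Φ)) :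
    ∀ z₁ z₂ : EuclideanSpace ℝ (Fin N),
      ‖D (z₁ - γ • Matrix.toEuclideanLin Φᵀ (Matrix.toEuclideanLin Φ z₁ - y)) -
        D (z₂ - γ • Matrix.toEuclideanLin Φᵀ (Matrix.toEuclideanLin Φ z₂ - y))‖ ≤
        δ * ‖z₁ - z₂‖ := by
  intro z₁ z₂
  set T := LinearMap.toContinuousLinearMap (toEuclideanLin Φ)
  have hγT : γ * ‖T‖ ^ 2 ≤ 2 := by
    rw [sigmaMax_transpose_mul_self] at hγ
    exact mul_le_of_le_div₀ zero_le_two (sq_nonneg _) hγ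
  have h_step : ∀ z, z - γ • toEuclideanLin Φᵀ (toEuclideanLin Φ z - y) =
      z - γ • T.adjoint (T z) + γ • T.adjoint y := by
    intro z
    rw [← toContinuousLinearMap_toEuclideanLin_transpose]
    simp only [LinearMap.coe_toContinuousLinearMap', map_sub, smul_sub, T]
    abel
  calc _ ≤ δ * ‖(z₁ - z₂) - γ • T.adjoint (T (z₁ - z₂))‖ := by
        refine (hD _ _).trans_eq ?_
        rw [h_step, h_step, map_sub, map_sub, smul_sub]
        congr 2
        abel
    _ ≤ δ * ‖z₁ - z₂‖ := by
        gcongr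
        exact T.norm_sub_smul_adjoint_comp_self_le hγ0.le hγT _

/-- If `D` is a `δ`-contraction with `δ ∈ [0,1)` and `0 < γ ≤ 2/σ_max(ΦᵀΦ)`, then
`S(x) = D(x - γ Φᵀ(Φx - y))` is a contraction with constant at most `δ`. -/
theorem stmt0 {M N : ℕ} (D : EuclideanSpace ℝ (Fin N) → EuclideanSpace ℝ (Fin N))
    (δ : ℝ) (hδ0 : 0 ≤ δ) (hδ1 : δ < 1)
    (hD : ∀ z₁ z₂ : EuclideanSpace ℝ (Fin N), ‖D z₁ - D z₂‖ ≤ δ * ‖z₁ - z₂‖)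
    (Φ : Matrix (Fin M) (Fin N) ℝ) (y : EuclideanSpace ℝ (Fin M))
    (γ : ℝ) (hγ0 : 0 < γ) (hγ : γ ≤ 2 / sigmaMax (Φᵀ * Φ)) :
    ∀ z₁ z₂ : EuclideanSpace ℝ (Fin N),
      ‖D (z₁ - γ • Matrix.toEuclideanLin Φᵀ (Matrix.toEuclideanLin Φ z₁ - y)) -
        D (z₂ - γ • Matrix.toEuclideanLin Φᵀ (Matrix.toEuclideanLin Φ z₂ - y))‖ ≤
        δ * ‖z₁ - z₂‖ :=
  stmt0_general D δ hδ0 hD Φ y γ hγ0 hγ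
end

section
/- Let C₁,...,C_K be symmetric P×P PSD matrices each with λ_max(Cⱼ) < 1, let b_{ji} ≥ 0 satisfy Σⱼ b_{ji} = 1 for each i = 1,...,N, let P_i be circular patch extraction operators, and define W = (1/P) Σ_{i=1}^N P_iᵀ (Σⱼ b_{ji} Cⱼ) P_i. Then W is symmetric positive semidefinite and λ_max(W) < 1; consequently z ↦ Wz is a contraction on ℝ^N. -/
/-!
Write `Dᵢ = Σⱼ bⱼᵢ Cⱼ`. The spectra of the `Cⱼ` are finite sets lying below `1`, so one
`c ∈ [0, 1)` satisfies `0 ≤ Cⱼ ≤ c • 1` in the Loewner order for every `j`, and by convexity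
`0 ≤ Dᵢ ≤ c • 1`. Conjugation by `Pᵢ` preserves the Loewner order and the patches cover every
coordinate exactly `P` times, `Σᵢ Pᵢᵀ Pᵢ = P • 1`; hence `0 ≤ W ≤ c • 1`. This bounds every
eigenvalue of `W` by `c`, and since the norm of a symmetric operator is the supremum of its
Rayleigh quotient, also `‖W‖ ≤ c < 1`.
-/

open Matrix

/-- The matrix of the circular patch-extraction operator `P_i : ℝ^N → ℝ^P`,
`(P_i z)_j = z_{(i+j) mod N}`. -/
def patchMatrix (P N : ℕ) (i : Fin N) : Matrix (Fin P) (Fin N) ℝ :=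
  fun j k => if k.1 = (i.1 + j.1) % N then 1 else 0

open scoped MatrixOrder

lemma Set.Finite.exists_mem_Ico_forall_le {α : Type*} [LinearOrder α] {s : Set α}
    (hs : s.Finite) {a b : α} (hab : a < b) (h : ∀ x ∈ s, x < b) :
    ∃ c, a ≤ c ∧ c < b ∧ ∀ x ∈ s, x ≤ c := by
  have := hs.to_subtype
  have := (Set.nonempty_Ico.mpr hab).to_subtype
  obtain ⟨c, hc⟩ := _root_.Finite.exists_le fun x : s ↦
    (⟨max a x, le_max_left _ _, max_lt hab (h x x.2)⟩ : Set.Ico a b)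
  exact ⟨c, c.2.1, c.2.2, fun x hx ↦ (le_max_right _ _).trans (hc ⟨x, hx⟩)⟩

lemma ContinuousLinearMap.opNorm_le_of_abs_reApplyInnerSelf_le {𝕜 E : Type*} [RCLike 𝕜]
    [NormedAddCommGroup E] [InnerProductSpace 𝕜 E] {T : E →L[𝕜] E}
    (hT : (T : E →ₗ[𝕜] E).IsSymmetric) {c : ℝ} (hc : 0 ≤ c)
    (h : ∀ x, |T.reApplyInnerSelf x| ≤ c * ‖x‖ ^ 2) : ‖T‖ ≤ c := by
  rw [T.norm_eq_iSup_rayleighQuotient hT]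
  refine ciSup_le fun x ↦ ?_
  rw [rayleighQuotient, abs_div, abs_sq]
  exact div_le_of_le_mul₀ (sq_nonneg _) hc (h x)

namespace Matrix

lemma exists_mulVec_eq_smul_of_mem_spectrum {K n : Type*} [Field K] [Fintype n]
    [DecidableEq n] {A : Matrix n n K} {μ : K} (h : μ ∈ spectrum K A) :
    ∃ v ≠ 0, A *ᵥ v = μ • v := by
  rw [← spectrum_toLin', ← Module.End.hasEigenvalue_iff_mem_spectrum] at h
  obtain ⟨v, hv⟩ := h.exists_hasEigenvector
  exact ⟨v, hv.2, by simpa using hv.apply_eq_smul⟩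

section SmulOneSub

variable {n : Type*} [Fintype n] [DecidableEq n]

lemma IsHermitian.posSemidef_smul_one_sub {A : Matrix n n ℝ} (hA : A.IsHermitian) {c : ℝ}
    (h : ∀ μ ∈ spectrum ℝ A, μ ≤ c) : (c • 1 - A).PosSemidef := by
  rw [← Algebra.algebraMap_eq_smul_one, ← le_iff]
  exact le_algebraMap_of_spectrum_le h hA

lemma exists_lt_forall_posSemidef_smul_one_sub {ι : Type*} [Finite ι] {C : ι → Matrix n n ℝ}
    (hC : ∀ j, (C j).IsHermitian) {a b : ℝ} (hab : a < b)
    (h : ∀ j μ (v : n → ℝ), v ≠ 0 → C j *ᵥ v = μ • v → μ < b) :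
    ∃ c, a ≤ c ∧ c < b ∧ ∀ j, (c • 1 - C j).PosSemidef := by
  have hspec : ∀ μ ∈ ⋃ j, spectrum ℝ (C j), μ < b := by
    simp only [Set.mem_iUnion]
    rintro μ ⟨j, hμ⟩
    obtain ⟨v, hv, hCv⟩ := exists_mulVec_eq_smul_of_mem_spectrum hμ
    exact h j μ v hv hCv
  obtain ⟨c, hac, hcb, hc⟩ :=
    (Set.finite_iUnion fun j ↦ (C j).finite_real_spectrum).exists_mem_Ico_forall_le hab hspec
  exact ⟨c, hac, hcb, fun j ↦ (hC j).posSemidef_smul_one_sub fun μ hμ ↦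
    hc μ (Set.mem_iUnion_of_mem j hμ)⟩

lemma PosSemidef.dotProduct_mulVec_le {A : Matrix n n ℝ} {c : ℝ} (h : (c • 1 - A).PosSemidef)
    (x : n → ℝ) : x ⬝ᵥ A *ᵥ x ≤ c * (x ⬝ᵥ x) := by
  simpa [sub_mulVec, smul_mulVec, dotProduct_sub] using h.dotProduct_mulVec_nonneg x

lemma PosSemidef.le_of_mulVec_eq_smul {A : Matrix n n ℝ} {c μ : ℝ} (h : (c • 1 - A).PosSemidef)
    {v : n → ℝ} (hv : v ≠ 0) (hAv : A *ᵥ v = μ • v) : μ ≤ c := by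
  have := h.dotProduct_mulVec_le v
  rw [hAv, dotProduct_smul, smul_eq_mul] at this
  exact le_of_mul_le_mul_right this (by simpa using dotProduct_star_self_pos_iff.mpr hv)

lemma norm_toEuclideanLin_le {A : Matrix n n ℝ} {c : ℝ} (hc : 0 ≤ c) (hA : A.PosSemidef)
    (hcA : (c • 1 - A).PosSemidef) (z : EuclideanSpace ℝ n) :
    ‖toEuclideanLin A z‖ ≤ c * ‖z‖ := by
  have hT : ‖toEuclideanCLM (𝕜 := ℝ) A‖ ≤ c := by
    refine ContinuousLinearMap.opNorm_le_of_abs_reApplyInnerSelf_le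
      (isSymmetric_toEuclideanLin_iff.mpr hA.1) hc fun x ↦ ?_
    rw [ContinuousLinearMap.reApplyInnerSelf_apply, RCLike.re_to_real, real_inner_comm,
      inner_toEuclideanCLM, ← real_inner_self_eq_norm_sq,
      EuclideanSpace.inner_eq_star_dotProduct, star_trivial,
      abs_of_nonneg (by simpa using hA.dotProduct_mulVec_nonneg x.ofLp)]
    exact hcA.dotProduct_mulVec_le x.ofLp
  exact (toEuclideanCLM (𝕜 := ℝ) A).le_of_opNorm_le hT z

end SmulOneSub

lemma posSemidef_sum_smul {ι n : Type*} [Fintype ι] [Fintype n] {M : ι → Matrix n n ℝ}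
    (hM : ∀ j, (M j).PosSemidef) {b : ι → ℝ} (hb : ∀ j, 0 ≤ b j) :
    (∑ j, b j • M j).PosSemidef :=
  posSemidef_sum _ fun j _ ↦ (hM j).smul (hb j)

lemma smul_one_sub_sum_smul {ι n : Type*} [Fintype ι] [DecidableEq n] (M : ι → Matrix n n ℝ)
    {b : ι → ℝ} (hb : ∑ j, b j = 1) (c : ℝ) :
    c • (1 : Matrix n n ℝ) - ∑ j, b j • M j = ∑ j, b j • (c • 1 - M j) := by
  simp only [smul_sub, Finset.sum_sub_distrib, smul_comm _ c, ← Finset.smul_sum,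
    ← Finset.sum_smul, hb, one_smul]

lemma posSemidef_inv_smul_sum_transpose_mul_mul {ι m n : Type*} [Fintype ι] [Fintype m]
    [Fintype n] (A : ι → Matrix m n ℝ) {M : ι → Matrix m m ℝ} (hM : ∀ i, (M i).PosSemidef)
    {s : ℝ} (hs : 0 ≤ s) : (s⁻¹ • ∑ i, (A i)ᵀ * M i * A i).PosSemidef := by
  refine (posSemidef_sum _ fun i _ ↦ ?_).smul (inv_nonneg.mpr hs)
  simpa only [conjTranspose_eq_transpose_of_trivial] using
    (hM i).conjTranspose_mul_mul_same (A i)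

lemma smul_one_sub_inv_smul_sum_transpose_mul_mul {ι m n : Type*} [Fintype ι] [Fintype m]
    [Fintype n] [DecidableEq m] [DecidableEq n] {A : ι → Matrix m n ℝ} {s : ℝ} (hs : s ≠ 0)
    (hA : ∑ i, (A i)ᵀ * A i = s • 1) (M : ι → Matrix m m ℝ) (c : ℝ) :
    c • (1 : Matrix n n ℝ) - s⁻¹ • ∑ i, (A i)ᵀ * M i * A i =
      s⁻¹ • ∑ i, (A i)ᵀ * (c • 1 - M i) * A i := by
  have hc : ∑ i, (A i)ᵀ * (c • (1 : Matrix m m ℝ)) * A i = c • s • (1 : Matrix n n ℝ) := by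
    simp only [Matrix.mul_smul, Matrix.smul_mul, Matrix.mul_one, ← Finset.smul_sum, hA]
  simp only [Matrix.mul_sub, Matrix.sub_mul, Finset.sum_sub_distrib, hc, smul_sub,
    smul_comm _ c, inv_smul_smul₀ hs]

end Matrix

lemma patchMatrix_apply (P N : ℕ) [NeZero N] (i : Fin N) (j : Fin P) (k : Fin N) :
    patchMatrix P N i j k = if k = i + Fin.ofNat N j then 1 else 0 := by
  simp only [patchMatrix, Fin.ext_iff, Fin.val_add, Fin.val_ofNat, Nat.add_mod_mod]

lemma sum_transpose_patchMatrix_mul_patchMatrix (P N : ℕ) :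
    ∑ i, (patchMatrix P N i)ᵀ * patchMatrix P N i = (P : ℝ) • 1 := by
  ext k l
  have : NeZero N := ⟨k.pos.ne'⟩
  have hcover : ∀ m : Fin N, ∑ i : Fin N, (if k = i + m then (1 : ℝ) else 0) *
      (if l = i + m then 1 else 0) = if k = l then 1 else 0 := by
    intro m
    rw [Finset.sum_eq_single (k - m)]
    · simp only [sub_add_cancel, if_true, one_mul, eq_comm]
    · intro i _ hi
      rw [if_neg fun h ↦ hi (by rw [h, add_sub_cancel_right]), zero_mul]
    · simp
  simp only [Matrix.sum_apply, mul_apply, transpose_apply, patchMatrix_apply]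
  rw [Finset.sum_comm]
  simp only [hcover, Finset.sum_const, Finset.card_univ, Fintype.card_fin, Matrix.smul_apply,
    one_apply, nsmul_eq_mul, smul_eq_mul]

theorem stmt8_general {P N K : ℕ} (hP : 0 < P)
    (C : Fin K → Matrix (Fin P) (Fin P) ℝ)
    (hC : ∀ j, (C j).PosSemidef)
    (hEig : ∀ j (μ : ℝ) (v : Fin P → ℝ), v ≠ 0 → (C j).mulVec v = μ • v → μ < 1)
    (b : Fin K → Fin N → ℝ) (hb : ∀ j i, 0 ≤ b j i) (hb1 : ∀ i, ∑ j, b j i = 1) :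
    let W : Matrix (Fin N) (Fin N) ℝ :=
      (P : ℝ)⁻¹ • ∑ i, (patchMatrix P N i)ᵀ * (∑ j, b j i • C j) * patchMatrix P N i
    W.PosSemidef ∧
      (∀ (μ : ℝ) (v : Fin N → ℝ), v ≠ 0 → W.mulVec v = μ • v → μ < 1) ∧
      ∃ δ : ℝ, δ < 1 ∧ ∀ z₁ z₂ : EuclideanSpace ℝ (Fin N),
        ‖Matrix.toEuclideanLin W z₁ - Matrix.toEuclideanLin W z₂‖ ≤ δ * ‖z₁ - z₂‖ := by
  intro W
  obtain ⟨c, hc0, hc1, hcC⟩ :=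
    exists_lt_forall_posSemidef_smul_one_sub (fun j ↦ (hC j).1) zero_lt_one hEig
  have hD : ∀ i, (∑ j, b j i • C j).PosSemidef := fun i ↦ posSemidef_sum_smul hC (hb · i)
  have hcD : ∀ i, (c • 1 - ∑ j, b j i • C j).PosSemidef := fun i ↦ by
    rw [smul_one_sub_sum_smul _ (hb1 i)]
    exact posSemidef_sum_smul hcC (hb · i)
  have hW : W.PosSemidef := posSemidef_inv_smul_sum_transpose_mul_mul _ hD P.cast_nonneg
  have hcW : (c • 1 - W).PosSemidef := by
    rw [smul_one_sub_inv_smul_sum_transpose_mul_mul (by positivity)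
      (sum_transpose_patchMatrix_mul_patchMatrix P N)]
    exact posSemidef_inv_smul_sum_transpose_mul_mul _ hcD P.cast_nonneg
  refine ⟨hW, fun μ v hv hWv ↦ (hcW.le_of_mulVec_eq_smul hv hWv).trans_lt hc1, c, hc1,
    fun z₁ z₂ ↦ ?_⟩
  rw [← map_sub]
  exact norm_toEuclideanLin_le hc0 hW hcW _

/-- Let `C₁,...,C_K` be symmetric PSD matrices with all eigenvalues `< 1`, let
`b_{ji} ≥ 0` with `Σⱼ b_{ji} = 1` for each `i`, and let
`W = (1/P) Σᵢ Pᵢᵀ (Σⱼ b_{ji} Cⱼ) Pᵢ` with circular patch extraction operators `Pᵢ`.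
Then `W` is symmetric PSD with every eigenvalue `< 1`; consequently `z ↦ Wz`
is a contraction on `ℝ^N` (with the Euclidean norm). -/
theorem stmt8 {P N K : ℕ} (hP : 0 < P) (hPN : P ∣ N)
    (C : Fin K → Matrix (Fin P) (Fin P) ℝ)
    (hC : ∀ j, (C j).PosSemidef)
    (hEig : ∀ j (μ : ℝ) (v : Fin P → ℝ), v ≠ 0 → (C j).mulVec v = μ • v → μ < 1)
    (b : Fin K → Fin N → ℝ) (hb : ∀ j i, 0 ≤ b j i) (hb1 : ∀ i, ∑ j, b j i = 1) :
    let W : Matrix (Fin N) (Fin N) ℝ :=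
      (P : ℝ)⁻¹ • ∑ i, (patchMatrix P N i)ᵀ * (∑ j, b j i • C j) * patchMatrix P N i
    W.PosSemidef ∧
      (∀ (μ : ℝ) (v : Fin N → ℝ), v ≠ 0 → W.mulVec v = μ • v → μ < 1) ∧
      ∃ δ : ℝ, δ < 1 ∧ ∀ z₁ z₂ : EuclideanSpace ℝ (Fin N),
        ‖Matrix.toEuclideanLin W z₁ - Matrix.toEuclideanLin W z₂‖ ≤ δ * ‖z₁ - z₂‖ :=
  stmt8_general hP C hC hEig b hb hb1
end
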